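/- arXiv:1311.7038 — 5 statements merged into one kernel-verified Lean document; each statement's English description precedes it below -/
import Mathlib

section
/- Suppose a subgroup sequence {1} = G₀ < G₁ < ⋯ < G_m = G with coset leader sets CL_k is fixed and every set CL_k is greed compatible. Then the subgroup decoding algorithm decodes robustly: for every g ∈ G, every received vector r ∈ DR(g), and every greedy run d₁, …, d_m on r, the output d_m⋯d₁ lies in the right coset S·g of the stabilizer S of x₀. -/
open Set
open scoped Pointwise

noncomputable section

namespace GroupCode

variable {V : Type*} [NormedAddCommGroup V] [InnerProductSpace ℂ V]

/-- The group of linear isometries of a complex inner product space. -/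
abbrev Iso (V : Type*) [NormedAddCommGroup V] [InnerProductSpace ℂ V] := V ≃ₗᵢ[ℂ] V

/-- The stabilizer (isotropy) of `x₀` inside a subgroup `H`. -/
def Stab (x₀ : V) (H : Subgroup (Iso V)) : Set (Iso V) := {h | h ∈ H ∧ h x₀ = x₀}

/-- The fundamental region of a subgroup `H`. -/
def FR (x₀ : V) (H : Subgroup (Iso V)) : Set V :=
  {x | ∀ h ∈ H, h ∉ Stab x₀ H → ‖x - x₀‖ < ‖h x - x₀‖}

/-- The decoding region of a group element `g ∈ G`. -/
def DR (x₀ : V) (G : Subgroup (Iso V)) (g : Iso V) : Set V :=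
  {x | ∀ a ∈ G, a ∉ Stab x₀ G * ({g} : Set (Iso V)) → ‖g x - x₀‖ < ‖a x - x₀‖}

/-- `CL` is a set of coset leaders for `K` over `H`: a subset of `K` containing `1` and
exactly one element of each left coset of `H` in `K`. -/
def IsCosetLeaders (H K : Subgroup (Iso V)) (CL : Set (Iso V)) : Prop :=
  CL ⊆ (K : Set (Iso V)) ∧ (1 : Iso V) ∈ CL ∧ ∀ a ∈ K, ∃! c, c ∈ CL ∧ c⁻¹ * a ∈ H

/-- Greed compatibility of a set of coset leaders for `K` over `H`. -/
def GreedCompatible (x₀ : V) (H K : Subgroup (Iso V)) (CL : Set (Iso V)) : Prop :=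
  ∀ x ∈ FR x₀ H, ∃ c ∈ CL, c x ∈ FR x₀ K

/-- A coset leader `c` of `K` over `H` is minimal if `x₀ ∈ c(FR(H))`. -/
def Minimal (x₀ : V) (H : Subgroup (Iso V)) (c : Iso V) : Prop :=
  x₀ ∈ ⇑c '' FR x₀ H

/-- A coset leader `c` of `K` over `H` is region minimal if `FR(K) ⊆ c(FR(H))`. -/
def RegionMinimal (x₀ : V) (H K : Subgroup (Iso V)) (c : Iso V) : Prop :=
  FR x₀ K ⊆ ⇑c '' FR x₀ H

/-- The product `d_k ⋯ d_1`. -/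
def pprod {α : Type*} [Monoid α] (d : ℕ → α) (k : ℕ) : α :=
  (List.range k).foldl (fun acc j => d (j + 1) * acc) 1

/-- The product `cs_ℓ ⋯ cs_{k+1}` of induced coset leaders. -/
def pprodRange {α : Type*} [Monoid α] (cs : ℕ → α) (k ℓ : ℕ) : α :=
  (List.range (ℓ - k)).foldl (fun acc j => cs (k + 1 + j) * acc) 1

/-- A greedy run of the subgroup decoding algorithm on a received vector `r`:
at each step `k`, `d k ∈ CL k` minimizes the distance of `d (d_{k-1} ⋯ d_1 r)` to `x₀`
over all `d ∈ CL k`. -/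
def IsGreedyRun (x₀ : V) (CL : ℕ → Set (Iso V)) (m : ℕ) (r : V) (d : ℕ → Iso V) : Prop :=
  ∀ k < m, d (k + 1) ∈ CL (k + 1) ∧
    ∀ e ∈ CL (k + 1), ‖(d (k + 1)) ((pprod d k) r) - x₀‖ ≤ ‖e ((pprod d k) r) - x₀‖

/-! Greedy decoding keeps the partially decoded vector `d_k ⋯ d_1 r` in `FR(G_k)`: greed
compatibility provides some leader `c` moving it into `FR(G_{k+1})`, and the greedy leader `e`
lands at least as close to `x₀`, so `e c⁻¹ ∈ G_{k+1}` cannot move `x₀` and `e = (e c⁻¹) c` also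
lands in `FR(G_{k+1})`. At the end `p = d_m ⋯ d_1` puts `r` into `FR(G)`; if `p ∉ S g`, then
`r ∈ DR(g)` makes `g r` strictly closer to `x₀` than `p r`, so `g p⁻¹` fixes `x₀`, i.e.
`p ∈ S g` after all. -/

@[simp]
lemma pprod_zero {α : Type*} [Monoid α] (d : ℕ → α) : pprod d 0 = 1 := rfl

lemma pprod_succ {α : Type*} [Monoid α] (d : ℕ → α) (k : ℕ) :
    pprod d (k + 1) = d (k + 1) * pprod d k := by
  simp [pprod, List.range_succ]

variable {x₀ : V} {H K : Subgroup (Iso V)}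

@[simp]
lemma FR_bot : FR x₀ (⊥ : Subgroup (Iso V)) = univ := by
  refine eq_univ_of_forall fun x h hh hns => absurd ⟨hh, ?_⟩ hns
  rw [Subgroup.mem_bot.mp hh, LinearIsometryEquiv.coe_one, id]

lemma norm_apply_sub_of_apply_eq {s : Iso V} (hs : s x₀ = x₀) (u : V) :
    ‖s u - x₀‖ = ‖u - x₀‖ :=
  calc ‖s u - x₀‖ = ‖s (u - x₀)‖ := by rw [map_sub, hs]
    _ = ‖u - x₀‖ := s.norm_map _

lemma apply_mem_FR_of_apply_eq {s : Iso V} (hsK : s ∈ K) (hs : s x₀ = x₀) {y : V}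
    (hy : y ∈ FR x₀ K) : s y ∈ FR x₀ K := by
  intro h hhK hh
  have hconj : s⁻¹ * h * s ∉ Stab x₀ K := by
    rintro ⟨-, hfix⟩
    refine hh ⟨hhK, ?_⟩
    simpa [hs, LinearIsometryEquiv.symm_apply_eq] using hfix
  calc ‖s y - x₀‖ = ‖y - x₀‖ := norm_apply_sub_of_apply_eq hs y
    _ < ‖(s⁻¹ * h * s) y - x₀‖ := hy _ (mul_mem (mul_mem (inv_mem hsK) hhK) hsK) hconj
    _ = ‖s ((s⁻¹ * h * s) y) - x₀‖ := (norm_apply_sub_of_apply_eq hs _).symm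
    _ = ‖h (s y) - x₀‖ := by simp

lemma apply_eq_of_mem_FR_of_norm_sub_le {y : V} (hy : y ∈ FR x₀ K) {k : Iso V} (hk : k ∈ K)
    (hle : ‖k y - x₀‖ ≤ ‖y - x₀‖) : k x₀ = x₀ := by
  by_contra hne
  exact (hy k hk fun hs => hne hs.2).not_ge hle

lemma apply_mem_FR_of_norm_sub_le {y : V} (hy : y ∈ FR x₀ K) {k : Iso V} (hk : k ∈ K)
    (hle : ‖k y - x₀‖ ≤ ‖y - x₀‖) : k y ∈ FR x₀ K :=
  apply_mem_FR_of_apply_eq hk (apply_eq_of_mem_FR_of_norm_sub_le hy hk hle) hy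

lemma GreedCompatible.apply_mem_FR_of_forall_norm_sub_le {CL : Set (Iso V)}
    (hgc : GreedCompatible x₀ H K CL) (hCL : CL ⊆ K) {x : V} (hx : x ∈ FR x₀ H) {e : Iso V}
    (he : e ∈ CL) (hmin : ∀ c ∈ CL, ‖e x - x₀‖ ≤ ‖c x - x₀‖) : e x ∈ FR x₀ K := by
  obtain ⟨c, hc, hcx⟩ := hgc x hx
  have hecx : (e * c⁻¹) (c x) = e x := by simp
  rw [← hecx]
  exact apply_mem_FR_of_norm_sub_le hcx (mul_mem (hCL he) (inv_mem (hCL hc)))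
    (hecx ▸ hmin c hc)

lemma IsGreedyRun.pprod_mem_and_apply_mem_FR {Gs : ℕ → Subgroup (Iso V)}
    {CL : ℕ → Set (Iso V)} {m : ℕ} {r : V} {d : ℕ → Iso V} (hd : IsGreedyRun x₀ CL m r d)
    (hG0 : Gs 0 = ⊥) (hmono : ∀ k < m, Gs k ≤ Gs (k + 1))
    (hCL : ∀ k < m, CL (k + 1) ⊆ Gs (k + 1))
    (hgc : ∀ k < m, GreedCompatible x₀ (Gs k) (Gs (k + 1)) (CL (k + 1))) :
    ∀ k ≤ m, pprod d k ∈ Gs k ∧ pprod d k r ∈ FR x₀ (Gs k) := by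
  intro k hk
  induction k with
  | zero => simp [hG0]
  | succ k ih =>
    obtain ⟨hmem, hFR⟩ := ih (by omega)
    obtain ⟨hdCL, hdmin⟩ := hd k hk
    rw [pprod_succ]
    exact ⟨mul_mem (hCL k hk hdCL) (hmono k hk hmem),
      (hgc k hk).apply_mem_FR_of_forall_norm_sub_le (hCL k hk) hFR hdCL hdmin⟩

lemma mem_stab_mul_of_mem_DR {G : Subgroup (Iso V)} {g : Iso V} (hg : g ∈ G) {r : V}
    (hr : r ∈ DR x₀ G g) {p : Iso V} (hp : p ∈ G) (hpr : p r ∈ FR x₀ G) :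
    p ∈ Stab x₀ G * ({g} : Set (Iso V)) := by
  by_contra hpg
  have hkp : (g * p⁻¹) (p r) = g r := by simp
  have hfix : (g * p⁻¹) x₀ = x₀ :=
    apply_eq_of_mem_FR_of_norm_sub_le hpr (mul_mem hg (inv_mem hp)) (hkp ▸ (hr p hp hpg).le)
  have hinv : (g * p⁻¹)⁻¹ x₀ = x₀ := by
    rw [LinearIsometryEquiv.coe_inv, LinearIsometryEquiv.symm_apply_eq, hfix]
  refine hpg ⟨p * g⁻¹, ⟨mul_mem hp (inv_mem hg), ?_⟩, g, rfl, inv_mul_cancel_right p g⟩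
  simpa using hinv

end GroupCode

open GroupCode in
theorem robust_decoding_of_greedCompatible_general
    {V : Type*} [NormedAddCommGroup V] [InnerProductSpace ℂ V]
    (G : Subgroup (Iso V))
    (x₀ : V)
    (m : ℕ)
    (Gs : ℕ → Subgroup (Iso V)) (CL : ℕ → Set (Iso V))
    (hG0 : Gs 0 = ⊥) (hGm : Gs m = G)
    (hlt : ∀ k < m, Gs k < Gs (k + 1))
    (hCL : ∀ k < m, IsCosetLeaders (Gs k) (Gs (k + 1)) (CL (k + 1)))
    (hgc : ∀ k < m, GreedCompatible x₀ (Gs k) (Gs (k + 1)) (CL (k + 1)))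
    (g : Iso V) (hg : g ∈ G)
    (r : V) (hr : r ∈ DR x₀ G g)
    (d : ℕ → Iso V) (hd : IsGreedyRun x₀ CL m r d) :
    pprod d m ∈ Stab x₀ G * ({g} : Set (Iso V)) := by
  obtain ⟨hpG, hpFR⟩ := hd.pprod_mem_and_apply_mem_FR hG0 (fun k hk => (hlt k hk).le)
    (fun k hk => (hCL k hk).1) hgc m le_rfl
  rw [hGm] at hpG hpFR
  exact mem_stab_mul_of_mem_DR hg hr hpG hpFR

open GroupCode in
/-- **Theorem (Statement 0).** If every set of coset leaders in a subgroup sequence is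
greed compatible, then the subgroup decoding algorithm decodes robustly: every greedy
run on a received vector `r ∈ DR(g)` outputs an element of the right coset `S·g` of the
stabilizer `S` of `x₀`. -/
theorem robust_decoding_of_greedCompatible
    {V : Type*} [NormedAddCommGroup V] [InnerProductSpace ℂ V] [FiniteDimensional ℂ V]
    (G : Subgroup (Iso V)) (hGfin : (G : Set (Iso V)).Finite)
    (x₀ : V) (hx₀ : ‖x₀‖ = 1)
    (m : ℕ) (hm : 1 ≤ m)
    (Gs : ℕ → Subgroup (Iso V)) (CL : ℕ → Set (Iso V))
    (hG0 : Gs 0 = ⊥) (hGm : Gs m = G)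
    (hlt : ∀ k < m, Gs k < Gs (k + 1))
    (hCL : ∀ k < m, IsCosetLeaders (Gs k) (Gs (k + 1)) (CL (k + 1)))
    (hgc : ∀ k < m, GreedCompatible x₀ (Gs k) (Gs (k + 1)) (CL (k + 1)))
    (g : Iso V) (hg : g ∈ G)
    (r : V) (hr : r ∈ DR x₀ G g)
    (d : ℕ → Iso V) (hd : IsGreedyRun x₀ CL m r d) :
    pprod d m ∈ Stab x₀ G * ({g} : Set (Iso V)) :=
  robust_decoding_of_greedCompatible_general G x₀ m Gs CL hG0 hGm hlt hCL hgc g hg r hr d hd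
end
end

section
/- Assume x₀ has full orbit under G and fix a subgroup sequence {1} = G₀ < G₁ < ⋯ < G_m = G with coset leader sets CL_k. If for every g ∈ G every greedy run on the received vector g⁻¹x₀ has output equal to g, then for all 0 ≤ k < ℓ ≤ m every induced coset leader c = c_ℓ⋯c_{k+1} ∈ CL(G_ℓ/G_k) is minimal as a coset leader of G_ℓ over G_k, i.e. x₀ ∈ c(FR(G_k)). -/
open Set
open scoped Pointwise

noncomputable section

section AuxPP
open GroupCode

theorem pprod_succ' {α : Type*} [Monoid α] (d : ℕ → α) (n : ℕ) :
    pprod d (n+1) = d (n+1) * pprod d n := by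
  simp [pprod, List.range_succ]

theorem pprodRange_self' {α : Type*} [Monoid α] (d : ℕ → α) (k : ℕ) :
    pprodRange d k k = 1 := by
  simp [pprodRange]

theorem pprodRange_zero' {α : Type*} [Monoid α] (d : ℕ → α) {k n : ℕ} (h : n ≤ k) :
    pprodRange d k n = 1 := by
  have h0 : n - k = 0 := by omega
  simp [pprodRange, h0]

theorem pprodRange_succ' {α : Type*} [Monoid α] (d : ℕ → α) {k n : ℕ} (h : k ≤ n) :
    pprodRange d k (n+1) = d (n+1) * pprodRange d k n := by
  have h1 : n + 1 - k = (n - k) + 1 := by omega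
  have h2 : k + 1 + (n - k) = n + 1 := by omega
  simp [pprodRange, h1, List.range_succ, h2]

theorem pprod_split' {α : Type*} [Monoid α] (d : ℕ → α) {k : ℕ} :
    ∀ n, k ≤ n → pprod d n = pprodRange d k n * pprod d k := by
  intro n
  induction n with
  | zero =>
    intro h
    have hk : k = 0 := by omega
    subst hk
    simp [pprodRange_self']
  | succ n ih =>
    intro h
    rcases Nat.eq_or_lt_of_le h with h' | h'
    · subst h'
      rw [pprodRange_self', one_mul]
    · have hkn : k ≤ n := by omega
      rw [pprod_succ', ih hkn, pprodRange_succ' d hkn, mul_assoc]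

theorem pprodRange_split' {α : Type*} [Monoid α] (d : ℕ → α) {k ℓ : ℕ} (hkl : k ≤ ℓ) :
    ∀ n, ℓ ≤ n → pprodRange d k n = pprodRange d ℓ n * pprodRange d k ℓ := by
  intro n
  induction n with
  | zero =>
    intro h
    have hℓ : ℓ = 0 := by omega
    subst hℓ
    rw [pprodRange_self', one_mul]
  | succ n ih =>
    intro h
    rcases Nat.eq_or_lt_of_le h with h' | h'
    · subst h'
      rw [pprodRange_self', one_mul]
    · have hln : ℓ ≤ n := by omega
      rw [pprodRange_succ' d (le_trans hkl hln), pprodRange_succ' d hln, ih hln, mul_assoc]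

theorem pprodRange_congr' {α : Type*} [Monoid α] (d e : ℕ → α) (k : ℕ) :
    ∀ n, (∀ i, k < i → i ≤ n → d i = e i) → pprodRange d k n = pprodRange e k n := by
  intro n
  induction n with
  | zero => intro _; rw [pprodRange_zero' d (by omega), pprodRange_zero' e (by omega)]
  | succ n ih =>
    intro hde
    rcases le_or_gt k n with h | h
    · rw [pprodRange_succ' d h, pprodRange_succ' e h, hde (n+1) (by omega) le_rfl,
        ih fun i h1 h2 => hde i h1 (by omega)]
    · rw [pprodRange_zero' d (by omega), pprodRange_zero' e (by omega)]

theorem pprodRange_eq_one' {α : Type*} [Monoid α] (d : ℕ → α) (k : ℕ) :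
    ∀ n, (∀ i, k < i → i ≤ n → d i = 1) → pprodRange d k n = 1 := by
  intro n
  induction n with
  | zero => intro _; exact pprodRange_zero' d (by omega)
  | succ n ih =>
    intro hd
    rcases le_or_gt k n with h | h
    · rw [pprodRange_succ' d h, hd (n+1) (by omega) le_rfl,
        ih fun i h1 h2 => hd i h1 (by omega), one_mul]
    · exact pprodRange_zero' d (by omega)

theorem pprodRange_mem' {α : Type*} [Group α] (H : Subgroup α) (d : ℕ → α) (k : ℕ) :
    ∀ n, (∀ i, k < i → i ≤ n → d i ∈ H) → pprodRange d k n ∈ H := by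
  intro n
  induction n with
  | zero => intro _; rw [pprodRange_zero' d (by omega)]; exact H.one_mem
  | succ n ih =>
    intro hd
    rcases le_or_gt k n with h | h
    · rw [pprodRange_succ' d h]
      exact mul_mem (hd (n+1) (by omega) le_rfl) (ih fun i h1 h2 => hd i h1 (by omega))
    · rw [pprodRange_zero' d (by omega)]; exact H.one_mem

end AuxPP

section AuxRun
open GroupCode

variable {V : Type*} [NormedAddCommGroup V] [InnerProductSpace ℂ V]

attribute [local instance] Classical.propDecidable

/-- A greedy choice from a candidate set `S`, given current vector `y`. -/
def greedyStep (x₀ : V) (S : Set (Iso V)) (y : V) : Iso V :=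
  if h : ∃ c, c ∈ S ∧ ∀ e ∈ S, ‖c y - x₀‖ ≤ ‖e y - x₀‖ then h.choose else 1

/-- Partial products of the greedy run that uses `1` for the first `k` steps. -/
def runP (x₀ : V) (CL : ℕ → Set (Iso V)) (k : ℕ) (r : V) : ℕ → Iso V
  | 0 => 1
  | n+1 => (if n+1 ≤ k then 1 else greedyStep x₀ (CL (n+1)) ((runP x₀ CL k r n) r))
      * runP x₀ CL k r n

/-- The steps of the greedy run that uses `1` for the first `k` steps. -/
def runD (x₀ : V) (CL : ℕ → Set (Iso V)) (k : ℕ) (r : V) (n : ℕ) : Iso V :=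
  match n with
  | 0 => 1
  | n+1 => if n+1 ≤ k then 1 else greedyStep x₀ (CL (n+1)) ((runP x₀ CL k r n) r)

theorem runP_succ (x₀ : V) (CL : ℕ → Set (Iso V)) (k : ℕ) (r : V) (n : ℕ) :
    runP x₀ CL k r (n+1) = runD x₀ CL k r (n+1) * runP x₀ CL k r n := rfl

theorem runD_succ (x₀ : V) (CL : ℕ → Set (Iso V)) (k : ℕ) (r : V) (n : ℕ) :
    runD x₀ CL k r (n+1)
      = if n+1 ≤ k then 1 else greedyStep x₀ (CL (n+1)) ((runP x₀ CL k r n) r) := rfl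

theorem pprod_runD (x₀ : V) (CL : ℕ → Set (Iso V)) (k : ℕ) (r : V) :
    ∀ n, pprod (runD x₀ CL k r) n = runP x₀ CL k r n := by
  intro n
  induction n with
  | zero => rfl
  | succ n ih => rw [pprod_succ', ih, runP_succ]

theorem runP_prefix (x₀ : V) (CL : ℕ → Set (Iso V)) (k : ℕ) (r : V) :
    ∀ n, n ≤ k → runP x₀ CL k r n = 1 := by
  intro n
  induction n with
  | zero => intro _; rfl
  | succ n ih =>
    intro h
    rw [runP_succ, runD_succ, if_pos h, one_mul, ih (by omega)]

end AuxRun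

open GroupCode in
/-- **Theorem (Statement 2).** If the subgroup decoding algorithm decodes correctly
(with no noise), then all induced coset leaders are minimal. -/
theorem minimal_induced_of_correct_decoding
    {V : Type*} [NormedAddCommGroup V] [InnerProductSpace ℂ V] [FiniteDimensional ℂ V]
    (G : Subgroup (Iso V)) (hGfin : (G : Set (Iso V)).Finite)
    (x₀ : V) (hx₀ : ‖x₀‖ = 1)
    (hfull : Stab x₀ G = ({1} : Set (Iso V)))
    (m : ℕ) (hm : 1 ≤ m)
    (Gs : ℕ → Subgroup (Iso V)) (CL : ℕ → Set (Iso V))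
    (hG0 : Gs 0 = ⊥) (hGm : Gs m = G)
    (hlt : ∀ k < m, Gs k < Gs (k + 1))
    (hCL : ∀ k < m, IsCosetLeaders (Gs k) (Gs (k + 1)) (CL (k + 1)))
    (hcorrect : ∀ g ∈ G, ∀ d : ℕ → Iso V,
      IsGreedyRun x₀ CL m (g⁻¹ x₀) d → pprod d m = g)
    (k ℓ : ℕ) (hkℓ : k < ℓ) (hℓm : ℓ ≤ m)
    (cs : ℕ → Iso V) (hcs : ∀ i, k < i → i ≤ ℓ → cs i ∈ CL i) :
    Minimal x₀ (Gs k) (pprodRange cs k ℓ) := by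
  classical
  have hkm : k ≤ m := by omega
  -- monotonicity of the chain
  have hmono : ∀ i j, i ≤ j → j ≤ m → Gs i ≤ Gs j := by
    intro i j hij hjm
    induction j with
    | zero =>
      have : i = 0 := by omega
      subst this; exact le_rfl
    | succ n ih =>
      rcases Nat.lt_or_ge i (n+1) with h | h
      · exact le_trans (ih (by omega) (by omega)) (le_of_lt (hlt n (by omega)))
      · have : i = n + 1 := by omega
        subst this; exact le_rfl
  have hCLsub : ∀ i, 0 < i → i ≤ m → CL i ⊆ (Gs i : Set (Iso V)) := by
    intro i hi him
    obtain ⟨j, rfl⟩ : ∃ j, i = j + 1 := ⟨i - 1, by omega⟩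
    exact (hCL j (by omega)).1
  have hCLone : ∀ i, 0 < i → i ≤ m → (1 : Iso V) ∈ CL i := by
    intro i hi him
    obtain ⟨j, rfl⟩ : ∃ j, i = j + 1 := ⟨i - 1, by omega⟩
    exact (hCL j (by omega)).2.1
  -- uniqueness of induced coset leader decompositions
  have uniq : ∀ n, k ≤ n → n ≤ m → ∀ d e : ℕ → Iso V, ∀ q : Iso V,
      (∀ i, k < i → i ≤ n → d i ∈ CL i) → (∀ i, k < i → i ≤ n → e i ∈ CL i) →
      q ∈ Gs k → pprodRange d k n = pprodRange e k n * q →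
      ∀ i, k < i → i ≤ n → d i = e i := by
    intro n hkn
    induction n, hkn using Nat.le_induction with
    | base => intro _ d e q _ _ _ _ i h1 h2; omega
    | succ n hkn ih =>
      intro hnm d e q hd he hq heq i hi hin
      have hnm' : n ≤ m := by omega
      have hPd : pprodRange d k n ∈ Gs n :=
        pprodRange_mem' (Gs n) d k n fun i h1 h2 =>
          hmono i n h2 hnm' (hCLsub i (by omega) (by omega) (hd i h1 (by omega)))
      have hPe : pprodRange e k n ∈ Gs n :=
        pprodRange_mem' (Gs n) e k n fun i h1 h2 =>
          hmono i n h2 hnm' (hCLsub i (by omega) (by omega) (he i h1 (by omega)))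
      have h5 : d (n+1) * pprodRange d k n = e (n+1) * (pprodRange e k n * q) := by
        rw [← mul_assoc, ← pprodRange_succ' d hkn, ← pprodRange_succ' e hkn]; exact heq
      have hmem : (e (n+1))⁻¹ * d (n+1) ∈ Gs n := by
        have h4 : (e (n+1))⁻¹ * d (n+1)
            = (pprodRange e k n * q) * (pprodRange d k n)⁻¹ := by
          calc (e (n+1))⁻¹ * d (n+1)
              = (e (n+1))⁻¹ * (d (n+1) * pprodRange d k n) * (pprodRange d k n)⁻¹ := by
                group
            _ = (e (n+1))⁻¹ * (e (n+1) * (pprodRange e k n * q)) * (pprodRange d k n)⁻¹ := by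
                rw [h5]
            _ = (pprodRange e k n * q) * (pprodRange d k n)⁻¹ := by group
        rw [h4]
        exact mul_mem (mul_mem hPe (hmono k n hkn hnm' hq)) (inv_mem hPd)
      have hdn1 : d (n+1) ∈ Gs (n+1) :=
        hCLsub (n+1) (by omega) (by omega) (hd (n+1) (by omega) le_rfl)
      obtain ⟨c0, hc0, hcu⟩ := (hCL n (by omega)).2.2 (d (n+1)) hdn1
      have h1 : d (n+1) = c0 := hcu (d (n+1)) ⟨hd (n+1) (by omega) le_rfl, by
        rw [inv_mul_cancel]; exact (Gs n).one_mem⟩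
      have h2 : e (n+1) = c0 := hcu (e (n+1)) ⟨he (n+1) (by omega) le_rfl, hmem⟩
      have hde : d (n+1) = e (n+1) := h1.trans h2.symm
      have hPeq : pprodRange d k n = pprodRange e k n * q := by
        have h6 := h5
        rw [hde] at h6
        exact mul_left_cancel h6
      rcases Nat.eq_or_lt_of_le hin with h' | h'
      · rw [h']; exact hde
      · exact ih hnm' d e q (fun i ha hb => hd i ha (by omega))
          (fun i ha hb => he i ha (by omega)) hq hPeq i hi (by omega)
  set c : Iso V := pprodRange cs k ℓ with hcdef
  have hcG : c ∈ Gs ℓ :=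
    pprodRange_mem' (Gs ℓ) cs k ℓ fun i h1 h2 =>
      hmono i ℓ h2 hℓm (hCLsub i (by omega) (by omega) (hcs i h1 h2))
  set y : V := c⁻¹ x₀ with hydef
  -- the key claim: any minimizer over Gs k must be 1
  have key : ∀ h : Iso V, h ∈ Gs k → (∀ q ∈ Gs k, ‖h y - x₀‖ ≤ ‖q y - x₀‖) → h = 1 := by
    intro h hh hmin
    set g : Iso V := c * h⁻¹ with hgdef
    have hgG : g ∈ G := by
      rw [← hGm]
      exact mul_mem (hmono ℓ m hℓm le_rfl hcG) (inv_mem (hmono k m hkm le_rfl hh))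
    set r : V := g⁻¹ x₀ with hrdef
    have hry : r = h y := by
      rw [hrdef, hgdef, mul_inv_rev, inv_inv, hydef]
      simp
    set D : ℕ → Iso V := runD x₀ CL k r with hDdef
    have hP : ∀ n, pprod D n = runP x₀ CL k r n := pprod_runD x₀ CL k r
    have hgreedy : IsGreedyRun x₀ CL m r D := by
      intro j hj
      by_cases hjk : j + 1 ≤ k
      · have hD1 : D (j+1) = 1 := by rw [hDdef, runD_succ, if_pos hjk]
        have hPj : pprod D j = 1 := by
          rw [hP j, runP_prefix x₀ CL k r j (by omega)]
        constructor
        · rw [hD1]; exact hCLone (j+1) (by omega) (by omega)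
        · intro e he
          rw [hD1, hPj, hry]
          have h1 : (1 : Iso V) ((1 : Iso V) (h y)) = h y := by simp
          have h2 : e ((1 : Iso V) (h y)) = (e * h) y := by simp
          rw [h1, h2]
          exact hmin (e * h)
            (mul_mem (hmono (j+1) k hjk hkm (hCLsub (j+1) (by omega) (by omega) he)) hh)
      · have hfin : (CL (j+1)).Finite :=
          hGfin.subset (subset_trans (hCLsub (j+1) (by omega) (by omega))
            (by rw [← hGm]; exact hmono (j+1) m (by omega) le_rfl))
        obtain ⟨c0, hc0, hc0m⟩ := Set.exists_min_image (CL (j+1))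
          (fun e => ‖e ((runP x₀ CL k r j) r) - x₀‖) hfin
          ⟨1, hCLone (j+1) (by omega) (by omega)⟩
        have hex : ∃ c1, c1 ∈ CL (j+1) ∧ ∀ e ∈ CL (j+1),
            ‖c1 ((runP x₀ CL k r j) r) - x₀‖ ≤ ‖e ((runP x₀ CL k r j) r) - x₀‖ :=
          ⟨c0, hc0, hc0m⟩
        have hD1 : D (j+1) = greedyStep x₀ (CL (j+1)) ((runP x₀ CL k r j) r) := by
          rw [hDdef, runD_succ, if_neg hjk]
        have hspec := hex.choose_spec
        have hgs : greedyStep x₀ (CL (j+1)) ((runP x₀ CL k r j) r) = hex.choose := by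
          rw [greedyStep, dif_pos hex]
        rw [hD1, hgs, hP j]
        exact hspec
    have hout : pprod D m = g := hcorrect g hgG D hgreedy
    have hPk1 : pprod D k = 1 := by rw [hP k, runP_prefix x₀ CL k r k le_rfl]
    have hsplit : pprod D m = pprodRange D k m := by
      rw [pprod_split' D m hkm, hPk1, mul_one]
    set E : ℕ → Iso V := fun i => if i ≤ ℓ then cs i else 1 with hEdef
    have hEprod : pprodRange E k m = c := by
      rw [pprodRange_split' E (le_of_lt hkℓ) m hℓm]
      have h1 : pprodRange E ℓ m = 1 :=
        pprodRange_eq_one' E ℓ m fun i hi him => by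
          rw [hEdef]; simp only; rw [if_neg (by omega)]
      have h2 : pprodRange E k ℓ = pprodRange cs k ℓ :=
        pprodRange_congr' E cs k ℓ fun i hi hil => by
          rw [hEdef]; simp only; rw [if_pos hil]
      rw [h1, h2, one_mul, hcdef]
    have hDcl : ∀ i, k < i → i ≤ m → D i ∈ CL i := by
      intro i hi him
      obtain ⟨j, rfl⟩ : ∃ j, i = j + 1 := ⟨i - 1, by omega⟩
      exact (hgreedy j (by omega)).1
    have hEcl : ∀ i, k < i → i ≤ m → E i ∈ CL i := by
      intro i hi him
      by_cases hil : i ≤ ℓ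
      · rw [hEdef]; simp only; rw [if_pos hil]; exact hcs i hi hil
      · rw [hEdef]; simp only; rw [if_neg hil]; exact hCLone i (by omega) him
    have heq : pprodRange D k m = pprodRange E k m * h⁻¹ := by
      rw [hEprod, ← hsplit, hout, hgdef]
    have hDE := uniq m hkm le_rfl D E h⁻¹ hDcl hEcl (inv_mem hh) heq
    have hDEeq : pprodRange D k m = pprodRange E k m :=
      pprodRange_congr' D E k m hDE
    have hinv : c = c * h⁻¹ := by
      have h7 := heq
      rw [hDEeq, hEprod] at h7
      exact h7
    have : h⁻¹ = 1 := by
      have := hinv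
      nth_rewrite 1 [← mul_one c] at this
      exact (mul_left_cancel this).symm
    exact inv_eq_one.mp this
  -- finish: minimizer exists, is 1, hence strict inequalities
  have hGkfin : ((Gs k : Set (Iso V))).Finite :=
    hGfin.subset (by rw [← hGm]; exact hmono k m hkm le_rfl)
  obtain ⟨h₀, h₀m, h₀min⟩ := Set.exists_min_image (Gs k : Set (Iso V))
    (fun q => ‖q y - x₀‖) hGkfin ⟨1, (Gs k).one_mem⟩
  have h₀1 : h₀ = 1 := key h₀ h₀m h₀min
  refine ⟨y, ?_, ?_⟩
  · intro h hh hns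
    have hne : h ≠ 1 := by
      rintro rfl
      exact hns ⟨hh, by simp⟩
    have hmin1 : ∀ q ∈ Gs k, ‖(1 : Iso V) y - x₀‖ ≤ ‖q y - x₀‖ := by
      intro q hq
      have := h₀min q hq
      rw [h₀1] at this
      exact this
    have hle : ‖(1 : Iso V) y - x₀‖ ≤ ‖h y - x₀‖ := hmin1 h hh
    have hnee : ‖(1 : Iso V) y - x₀‖ ≠ ‖h y - x₀‖ := by
      intro heq2
      apply hne
      exact key h hh fun q hq => heq2 ▸ hmin1 q hq
    have h1y : (1 : Iso V) y = y := by simp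
    rw [h1y] at hle hnee
    exact lt_of_le_of_ne hle hnee
  · rw [hydef]
    simp
end
end

section
/- Assume x₀ has full orbit under G, G acts nontrivially on x₀, and consider a short subgroup sequence {1} = G₀ < G₁ < G₂ = G with coset leader sets CL₁ = G₁ and CL₂ = CL(G/G₁). Then there exists δ > 0 such that for every g ∈ G and every r with ‖r − g⁻¹x₀‖ < δ every greedy run on r has output equal to g, if and only if every coset leader in CL(G/G₁) is minimal. -/
open Set
open scoped Pointwise

noncomputable section

/-!
Necessity: at the noiseless vector `r = c⁻¹ x₀`, if `c` is not minimal then some `d₁ ≠ 1` in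
`G₁` is a greedy first step, and the output `d₂ d₁` can equal `c` only if `d₂ = c` (both lead
the coset `c G₁`), forcing `d₁ = 1`. Sufficiency: write `g = c h` with `c ∈ CL₂` and `h ∈ G₁`.
With full orbit, minimality of `c` makes `h` the strict greedy choice at `(c h)⁻¹ x₀`, and `c`
the strict greedy choice at `h (c h)⁻¹ x₀ = c⁻¹ x₀`. A strict minimizer of finitely many
continuous functions stays the only minimizer near the point, and finiteness of `G` makes the
admissible noise radius uniform.
-/

open Filter Topology

lemma Set.Finite.exists_pos_forall_dist_lt {ι X : Type*} [PseudoMetricSpace X] {s : Set ι}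
    (hs : s.Finite) {y : ι → X} {P : ι → X → Prop} (h : ∀ i ∈ s, ∀ᶠ x in 𝓝 (y i), P i x) :
    ∃ δ > 0, ∀ i ∈ s, ∀ x, dist x (y i) < δ → P i x := by
  have hδ : ∀ᶠ δ in 𝓝[>] (0 : ℝ), ∀ i ∈ s, ∀ x, dist x (y i) < δ → P i x := by
    rw [hs.eventually_all]
    intro i hi
    obtain ⟨ε, hε, hP⟩ := Metric.eventually_nhds_iff.1 (h i hi)
    filter_upwards [Ioo_mem_nhdsGT hε] with δ hδ x hx using hP (hx.trans hδ.2)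
  obtain ⟨δ, hP, hpos⟩ := (hδ.and self_mem_nhdsWithin).exists
  exact ⟨δ, hpos, hP⟩

lemma eventually_eq_of_forall_lt {ι X : Type*} [TopologicalSpace X] {A : Set ι}
    (hA : A.Finite) {f : ι → X → ℝ} (hf : ∀ i ∈ A, Continuous (f i)) {a : ι} (ha : a ∈ A)
    {y : X} (hlt : ∀ b ∈ A, b ≠ a → f a y < f b y) :
    ∀ᶠ x in 𝓝 y, ∀ d ∈ A, (∀ e ∈ A, f d x ≤ f e x) → d = a := by
  have hnear : ∀ᶠ x in 𝓝 y, ∀ b ∈ A, b ≠ a → f a x < f b x := by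
    rw [hA.eventually_all]
    intro b hb
    by_cases hba : b = a
    · exact .of_forall fun _ h => absurd hba h
    · filter_upwards [(hf a ha).continuousAt.eventually_lt (hf b hb).continuousAt
        (hlt b hb hba)] with x hx _ using hx
  filter_upwards [hnear] with x hx d hd hmin
  by_contra hda
  exact (hmin a ha).not_gt (hx d hd hda)

lemma Set.Finite.exists_ne_forall_le {ι : Type*} {A : Set ι} (hA : A.Finite) (φ : ι → ℝ)
    {a b : ι} (hb : b ∈ A) (hba : b ≠ a) (hle : φ b ≤ φ a) :
    ∃ d ∈ A, d ≠ a ∧ ∀ e ∈ A, φ d ≤ φ e := by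
  obtain ⟨d, ⟨hd, hda⟩, hmin⟩ := Set.exists_min_image (A \ {a}) φ hA.sdiff ⟨b, hb, hba⟩
  refine ⟨d, hd, hda, fun e he => ?_⟩
  rcases eq_or_ne e a with rfl | hea
  · exact (hmin b ⟨hb, hba⟩).trans hle
  · exact hmin e ⟨he, hea⟩

namespace GroupCode

variable {V : Type*} [NormedAddCommGroup V] [InnerProductSpace ℂ V] {x₀ : V}
  {G H : Subgroup (Iso V)}

lemma IsCosetLeaders.eq_of_inv_mul_mem {CL : Set (Iso V)} (hCL : IsCosetLeaders H G CL)
    {c c' : Iso V} (hc : c ∈ CL) (hc' : c' ∈ CL) (h : c⁻¹ * c' ∈ H) : c = c' := by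
  obtain ⟨_, _, huniq⟩ := hCL.2.2 c' (hCL.1 hc')
  exact (huniq c ⟨hc, h⟩).trans (huniq c' ⟨hc', by simp⟩).symm

lemma mem_stab_iff_eq_one (hfull : Stab x₀ G = {1}) (hHG : H ≤ G) {h : Iso V} (hh : h ∈ H) :
    h ∈ Stab x₀ H ↔ h = 1 := by
  refine ⟨fun hs => ?_, fun h1 => ⟨hh, by simp [h1]⟩⟩
  have : h ∈ Stab x₀ G := ⟨hHG hh, hs.2⟩
  rwa [hfull] at this

lemma mem_FR_iff (hfull : Stab x₀ G = {1}) (hHG : H ≤ G) {x : V} :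
    x ∈ FR x₀ H ↔ ∀ h ∈ H, h ≠ 1 → ‖x - x₀‖ < ‖h x - x₀‖ := by
  refine forall₂_congr fun h hh => ?_
  rw [mem_stab_iff_eq_one hfull hHG hh]

lemma minimal_iff {c : Iso V} : Minimal x₀ H c ↔ c⁻¹ x₀ ∈ FR x₀ H := by
  rw [Minimal, LinearIsometryEquiv.image_eq_preimage_symm, LinearIsometryEquiv.coe_inv]
  rfl

lemma minimal_of_decodes (hH : (H : Set (Iso V)).Finite)
    {CL : Set (Iso V)} (hCL : IsCosetLeaders H G CL) (hCLfin : CL.Finite) {c : Iso V}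
    (hc : c ∈ CL)
    (hdec : ∀ d₁ d₂ : Iso V, d₁ ∈ H → (∀ e ∈ H, ‖d₁ (c⁻¹ x₀) - x₀‖ ≤ ‖e (c⁻¹ x₀) - x₀‖) →
      d₂ ∈ CL → (∀ e ∈ CL, ‖d₂ (d₁ (c⁻¹ x₀)) - x₀‖ ≤ ‖e (d₁ (c⁻¹ x₀)) - x₀‖) → d₂ * d₁ = c) :
    Minimal x₀ H c := by
  rw [minimal_iff]
  by_contra hnot
  obtain ⟨h, hh, hhs, hle⟩ : ∃ h ∈ H, h ∉ Stab x₀ H ∧ ‖h (c⁻¹ x₀) - x₀‖ ≤ ‖c⁻¹ x₀ - x₀‖ := by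
    simpa [FR] using hnot
  obtain ⟨d₁, hd₁, hd₁1, hd₁min⟩ := hH.exists_ne_forall_le (fun e => ‖e (c⁻¹ x₀) - x₀‖) hh
    (a := 1) (fun h1 => hhs ⟨hh, by simp [h1]⟩) (by simpa using hle)
  obtain ⟨d₂, hd₂, hd₂min⟩ := Set.exists_min_image CL (fun e => ‖e (d₁ (c⁻¹ x₀)) - x₀‖)
    hCLfin ⟨1, hCL.2.1⟩
  have hout := hdec d₁ d₂ hd₁ hd₁min hd₂ hd₂min
  have hd₂c : d₂ = c := hCL.eq_of_inv_mul_mem hd₂ hc (by simpa [← hout] using hd₁)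
  exact hd₁1 (by simpa [hd₂c] using hout)

lemma eventually_first_step_eq (hfull : Stab x₀ G = {1}) (hHG : H ≤ G)
    (hH : (H : Set (Iso V)).Finite) {c h : Iso V} (hmin : Minimal x₀ H c) (hh : h ∈ H) :
    ∀ᶠ r in 𝓝 ((c * h)⁻¹ x₀), ∀ d ∈ H, (∀ e ∈ H, ‖d r - x₀‖ ≤ ‖e r - x₀‖) → d = h := by
  refine eventually_eq_of_forall_lt hH (fun e _ => by fun_prop) hh fun b hb hbh => ?_
  have hbh' : b * h⁻¹ ∈ H := mul_mem hb (inv_mem hh)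
  have := (mem_FR_iff hfull hHG).1 (minimal_iff.1 hmin) _ hbh' (mul_inv_eq_one.not.2 hbh)
  simpa [mul_inv_rev] using this

lemma eventually_second_step_eq (hfull : Stab x₀ G = {1}) {CL : Set (Iso V)}
    (hCL : IsCosetLeaders H G CL) (hCLfin : CL.Finite) {c : Iso V} (hc : c ∈ CL) :
    ∀ᶠ r in 𝓝 (c⁻¹ x₀), ∀ d ∈ CL, (∀ e ∈ CL, ‖d r - x₀‖ ≤ ‖e r - x₀‖) → d = c := by
  refine eventually_eq_of_forall_lt hCLfin (fun e _ => by fun_prop) hc fun b hb hbc => ?_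
  have hbc' : b * c⁻¹ ∈ G := mul_mem (hCL.1 hb) (inv_mem (hCL.1 hc))
  have := (mem_stab_iff_eq_one hfull le_rfl hbc').not.2 (mul_inv_eq_one.not.2 hbc)
  simpa [Stab, hbc', sub_eq_zero] using this

lemma eventually_decodes (hfull : Stab x₀ G = {1}) (hHG : H ≤ G)
    (hH : (H : Set (Iso V)).Finite) {CL : Set (Iso V)} (hCL : IsCosetLeaders H G CL)
    (hCLfin : CL.Finite) {c h : Iso V} (hc : c ∈ CL) (hmin : Minimal x₀ H c) (hh : h ∈ H) :
    ∀ᶠ r in 𝓝 ((c * h)⁻¹ x₀), ∀ d₁ d₂ : Iso V,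
      d₁ ∈ H → (∀ e ∈ H, ‖d₁ r - x₀‖ ≤ ‖e r - x₀‖) →
      d₂ ∈ CL → (∀ e ∈ CL, ‖d₂ (d₁ r) - x₀‖ ≤ ‖e (d₁ r) - x₀‖) → d₂ * d₁ = c * h := by
  have hmaps : Tendsto h (𝓝 ((c * h)⁻¹ x₀)) (𝓝 (c⁻¹ x₀)) := by
    simpa [mul_inv_rev] using h.continuous.tendsto ((c * h)⁻¹ x₀)
  filter_upwards [eventually_first_step_eq hfull hHG hH hmin hh,
    hmaps.eventually (eventually_second_step_eq hfull hCL hCLfin hc)]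
    with r hstep₁ hstep₂ d₁ d₂ hd₁ hd₁min hd₂ hd₂min
  obtain rfl := hstep₁ d₁ hd₁ hd₁min
  rw [hstep₂ d₂ hd₂ hd₂min]

end GroupCode

open GroupCode in
theorem short_sequence_correct_iff_minimal_general
    {V : Type*} [NormedAddCommGroup V] [InnerProductSpace ℂ V]
    (G : Subgroup (Iso V)) (hGfin : (G : Set (Iso V)).Finite)
    (x₀ : V)
    (hfull : Stab x₀ G = ({1} : Set (Iso V)))
    (G₁ : Subgroup (Iso V)) (hG₁G : G₁ < G)
    (CL₂ : Set (Iso V)) (hCL₂ : IsCosetLeaders G₁ G CL₂) :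
    (∃ δ > (0 : ℝ), ∀ g ∈ G, ∀ r : V, ‖r - g⁻¹ x₀‖ < δ →
        ∀ d₁ d₂ : Iso V,
          d₁ ∈ G₁ → (∀ e ∈ G₁, ‖d₁ r - x₀‖ ≤ ‖e r - x₀‖) →
          d₂ ∈ CL₂ → (∀ e ∈ CL₂, ‖d₂ (d₁ r) - x₀‖ ≤ ‖e (d₁ r) - x₀‖) →
          d₂ * d₁ = g) ↔
      ∀ c ∈ CL₂, Minimal x₀ G₁ c := by
  have hG₁fin : (G₁ : Set (Iso V)).Finite := hGfin.subset hG₁G.le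
  have hCLfin : CL₂.Finite := hGfin.subset hCL₂.1
  constructor
  · rintro ⟨δ, hδ, hdec⟩ c hc
    exact minimal_of_decodes hG₁fin hCL₂ hCLfin hc (hdec c (hCL₂.1 hc) _ (by simpa using hδ))
  · intro hmin
    obtain ⟨δ, hδ, hdec⟩ := hGfin.exists_pos_forall_dist_lt (y := fun g => g⁻¹ x₀) fun g hg => by
      obtain ⟨c, ⟨hc, hcg⟩, -⟩ := hCL₂.2.2 g hg
      simpa using eventually_decodes hfull hG₁G.le hG₁fin hCL₂ hCLfin hc (hmin c hc) hcg
    exact ⟨δ, hδ, fun g hg r hr => hdec g hg r (by rwa [dist_eq_norm])⟩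

open GroupCode in
/-- **Theorem (Statement 5).** For a short subgroup sequence `{1} < G₁ < G` with coset
leaders `CL₁ = G₁` and `CL₂ = CL(G/G₁)`, the subgroup decoding algorithm decodes
correctly with some noise if and only if the coset leaders in `CL(G/G₁)` are minimal. -/
theorem short_sequence_correct_iff_minimal
    {V : Type*} [NormedAddCommGroup V] [InnerProductSpace ℂ V] [FiniteDimensional ℂ V]
    (G : Subgroup (Iso V)) (hGfin : (G : Set (Iso V)).Finite)
    (x₀ : V) (hx₀ : ‖x₀‖ = 1)
    (hfull : Stab x₀ G = ({1} : Set (Iso V)))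
    (hnontriv : ∃ g ∈ G, g x₀ ≠ x₀)
    (G₁ : Subgroup (Iso V)) (hbot : ⊥ < G₁) (hG₁G : G₁ < G)
    (CL₂ : Set (Iso V)) (hCL₂ : IsCosetLeaders G₁ G CL₂) :
    (∃ δ > (0 : ℝ), ∀ g ∈ G, ∀ r : V, ‖r - g⁻¹ x₀‖ < δ →
        ∀ d₁ d₂ : Iso V,
          d₁ ∈ G₁ → (∀ e ∈ G₁, ‖d₁ r - x₀‖ ≤ ‖e r - x₀‖) →
          d₂ ∈ CL₂ → (∀ e ∈ CL₂, ‖d₂ (d₁ r) - x₀‖ ≤ ‖e (d₁ r) - x₀‖) →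
          d₂ * d₁ = g) ↔
      ∀ c ∈ CL₂, Minimal x₀ G₁ c :=
  short_sequence_correct_iff_minimal_general G hGfin x₀ hfull G₁ hG₁G CL₂ hCL₂
end
end

section
/- Assume x₀ has full orbit under G and fix a subgroup sequence {1} = G₀ < G₁ < ⋯ < G_m = G with coset leader sets CL_k. If for every 1 ≤ k ≤ m every coset leader in CL_k = CL(G_k/G_{k−1}) is region minimal, then for every 1 ≤ j < m every induced coset leader c_m⋯c_{j+1} ∈ CL(G/G_j) is region minimal as a coset leader of G over G_j, i.e. FR(G) ⊆ c_m⋯c_{j+1}(FR(G_j)). -/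
open Set
open scoped Pointwise

noncomputable section

/-! Region minimality is transitive: `FR(L) ⊆ d(FR(K))` and `FR(K) ⊆ c(FR(H))` give
`FR(L) ⊆ (d c)(FR(H))`. Composing along `G_j < ⋯ < G_m` proves the theorem by induction. -/

namespace GroupCode

section RegionMinimal

variable {V : Type*} [NormedAddCommGroup V] [InnerProductSpace ℂ V] {x₀ : V}

theorem RegionMinimal.one (H : Subgroup (Iso V)) : RegionMinimal x₀ H H 1 := by
  simp [RegionMinimal]

theorem RegionMinimal.mul {H K L : Subgroup (Iso V)} {c d : Iso V}
    (hc : RegionMinimal x₀ H K c) (hd : RegionMinimal x₀ K L d) :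
    RegionMinimal x₀ H L (d * c) :=
  calc FR x₀ L ⊆ ⇑d '' FR x₀ K := hd
    _ ⊆ ⇑d '' (⇑c '' FR x₀ H) := image_mono hc
    _ = ⇑(d * c) '' FR x₀ H := image_image _ _ _

end RegionMinimal

section pprodRange

variable {α : Type*} [Monoid α] (cs : ℕ → α)

@[simp]
theorem pprodRange_self (k : ℕ) : pprodRange cs k k = 1 := by
  simp [pprodRange]

theorem pprodRange_succ {k ℓ : ℕ} (h : k ≤ ℓ) :
    pprodRange cs k (ℓ + 1) = cs (ℓ + 1) * pprodRange cs k ℓ := by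
  have hlen : ℓ + 1 - k = ℓ - k + 1 := by omega
  have hidx : k + 1 + (ℓ - k) = ℓ + 1 := by omega
  simp [pprodRange, hlen, List.range_succ, hidx]

end pprodRange

theorem regionMinimal_pprodRange {V : Type*} [NormedAddCommGroup V] [InnerProductSpace ℂ V]
    {x₀ : V} {Gs : ℕ → Subgroup (Iso V)} {cs : ℕ → Iso V} {j ℓ : ℕ} (hjℓ : j ≤ ℓ)
    (h : ∀ k, j ≤ k → k < ℓ → RegionMinimal x₀ (Gs k) (Gs (k + 1)) (cs (k + 1))) :
    RegionMinimal x₀ (Gs j) (Gs ℓ) (pprodRange cs j ℓ) := by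
  induction ℓ, hjℓ using Nat.le_induction with
  | base => simpa using RegionMinimal.one (Gs j)
  | succ ℓ hjℓ ih =>
    rw [pprodRange_succ cs hjℓ]
    exact (ih fun k hjk hkℓ => h k hjk (by omega)).mul (h ℓ hjℓ (by omega))

end GroupCode

open GroupCode in
theorem regionMinimal_induced_of_regionMinimal_general
    {V : Type*} [NormedAddCommGroup V] [InnerProductSpace ℂ V]
    (G : Subgroup (Iso V))
    (x₀ : V)
    (m : ℕ)
    (Gs : ℕ → Subgroup (Iso V)) (CL : ℕ → Set (Iso V))
    (hGm : Gs m = G)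
    (hrm : ∀ k < m, ∀ c ∈ CL (k + 1), RegionMinimal x₀ (Gs k) (Gs (k + 1)) c)
    (j : ℕ) (hjm : j < m)
    (cs : ℕ → Iso V) (hcs : ∀ i, j < i → i ≤ m → cs i ∈ CL i) :
    RegionMinimal x₀ (Gs j) G (pprodRange cs j m) := by
  rw [← hGm]
  exact regionMinimal_pprodRange hjm.le fun k hjk hkm =>
    hrm k hkm _ (hcs (k + 1) (by omega) hkm)

open GroupCode in
/-- **Theorem (Statement 7).** If every coset leader in each `CL(G_k/G_{k-1})` is region
minimal, then every induced coset leader for `G` over each `G_j` is region minimal. -/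
theorem regionMinimal_induced_of_regionMinimal
    {V : Type*} [NormedAddCommGroup V] [InnerProductSpace ℂ V] [FiniteDimensional ℂ V]
    (G : Subgroup (Iso V)) (hGfin : (G : Set (Iso V)).Finite)
    (x₀ : V) (hx₀ : ‖x₀‖ = 1)
    (hfull : Stab x₀ G = ({1} : Set (Iso V)))
    (m : ℕ) (hm : 1 ≤ m)
    (Gs : ℕ → Subgroup (Iso V)) (CL : ℕ → Set (Iso V))
    (hG0 : Gs 0 = ⊥) (hGm : Gs m = G)
    (hlt : ∀ k < m, Gs k < Gs (k + 1))
    (hCL : ∀ k < m, IsCosetLeaders (Gs k) (Gs (k + 1)) (CL (k + 1)))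
    (hrm : ∀ k < m, ∀ c ∈ CL (k + 1), RegionMinimal x₀ (Gs k) (Gs (k + 1)) c)
    (j : ℕ) (hj1 : 1 ≤ j) (hjm : j < m)
    (cs : ℕ → Iso V) (hcs : ∀ i, j < i → i ≤ m → cs i ∈ CL i) :
    RegionMinimal x₀ (Gs j) G (pprodRange cs j m) :=
  regionMinimal_induced_of_regionMinimal_general G x₀ m Gs CL hGm hrm j hjm cs hcs
end
end

section
/- Assume x₀ has full orbit under G, G acts nontrivially on x₀, and fix a subgroup sequence {1} = G₀ < G₁ < ⋯ < G_m = G with coset leader sets CL_k, each greed compatible, and subsets X_k ⊆ G_k with X₀ = ∅ satisfying the Error Control Property: for every 1 ≤ k ≤ m, every b ∈ X_k ∪ X_k⁻¹, and every c ∈ CL_k, either bc ∈ CL_k or c⁻¹bc ∈ X_{k−1} ∪ X_{k−1}⁻¹. Assume also the Nearest Neighbors Property: N_G ⊆ X_m ∪ X_m⁻¹, where N_G = {a ∈ G : a ≠ 1 and ‖a x₀ − x₀‖ = d_min}. Let g ∈ G, let b ∈ N_G, and suppose the received vector r lies in DR(b⁻¹g). Then every greedy run on r has output equal to b⁻¹g,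 and the canonical forms of b⁻¹g and g as products of coset leaders differ in at most one factor: writing g = c_m⋯c_1 and b⁻¹g = c'_m⋯c'_1 with c_k, c'_k ∈ CL_k, we have c'_i = c_i for all but at most one index i. -/
open Set
open scoped Pointwise

noncomputable section

section Helpers

open GroupCode

lemma GC_pprod_succ {α : Type*} [Monoid α] (d : ℕ → α) (k : ℕ) :
    pprod d (k + 1) = d (k + 1) * pprod d k := by
  simp [pprod, List.range_succ, Nat.add_comm 1 k]

lemma GC_pprodRange_succ {α : Type*} [Monoid α] (d : ℕ → α) (k : ℕ) :
    pprodRange d 0 (k + 1) = d (k + 1) * pprodRange d 0 k := by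
  simp [pprodRange, List.range_succ, Nat.add_comm 1 k]

lemma GC_pprodRange_congr {α : Type*} [Monoid α] (d e : ℕ → α) (k : ℕ)
    (h : ∀ j, 1 ≤ j → j ≤ k → d j = e j) : pprodRange d 0 k = pprodRange e 0 k := by
  induction k with
  | zero => rfl
  | succ n ih =>
    rw [GC_pprodRange_succ, GC_pprodRange_succ, h (n + 1) (by omega) le_rfl,
      ih (fun j h1 h2 => h j h1 (by omega))]

end Helpers

open GroupCode in
/-- **Theorem (Statement 11).** With greed compatible coset leaders, the Error Control
Property and the Nearest Neighbors Property, a received vector landing in the decoding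
region of a nearest neighbor `b⁻¹g` of the sent message `g` decodes to `b⁻¹g`, whose
canonical form differs from that of `g` in at most one factor. -/
theorem error_control_nearest_neighbor_decoding
    {V : Type*} [NormedAddCommGroup V] [InnerProductSpace ℂ V] [FiniteDimensional ℂ V]
    (G : Subgroup (Iso V)) (hGfin : (G : Set (Iso V)).Finite)
    (x₀ : V) (hx₀ : ‖x₀‖ = 1)
    (hfull : Stab x₀ G = ({1} : Set (Iso V)))
    (hnontriv : ∃ g ∈ G, g x₀ ≠ x₀)
    (dmin : ℝ)
    (hdmin : IsLeast {t : ℝ | ∃ a ∈ G, a ∉ Stab x₀ G ∧ t = ‖a x₀ - x₀‖} dmin)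
    (m : ℕ) (hm : 1 ≤ m)
    (Gs : ℕ → Subgroup (Iso V)) (CL : ℕ → Set (Iso V))
    (hG0 : Gs 0 = ⊥) (hGm : Gs m = G)
    (hlt : ∀ k < m, Gs k < Gs (k + 1))
    (hCL : ∀ k < m, IsCosetLeaders (Gs k) (Gs (k + 1)) (CL (k + 1)))
    (hgc : ∀ k < m, GreedCompatible x₀ (Gs k) (Gs (k + 1)) (CL (k + 1)))
    (X : ℕ → Set (Iso V)) (hX0 : X 0 = ∅)
    (hXsub : ∀ k ≤ m, X k ⊆ (Gs k : Set (Iso V)))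
    (hECP : ∀ k < m, ∀ b ∈ X (k + 1) ∪ (X (k + 1))⁻¹, ∀ c ∈ CL (k + 1),
      b * c ∈ CL (k + 1) ∨ c⁻¹ * b * c ∈ X k ∪ (X k)⁻¹)
    (hNN : {a : Iso V | a ∈ G ∧ a ≠ 1 ∧ ‖a x₀ - x₀‖ = dmin} ⊆ X m ∪ (X m)⁻¹)
    (g : Iso V) (hg : g ∈ G)
    (b : Iso V) (hb : b ∈ {a : Iso V | a ∈ G ∧ a ≠ 1 ∧ ‖a x₀ - x₀‖ = dmin})
    (r : V) (hr : r ∈ DR x₀ G (b⁻¹ * g)) :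
    (∀ d : ℕ → Iso V, IsGreedyRun x₀ CL m r d → pprod d m = b⁻¹ * g) ∧
    (∀ cs cs' : ℕ → Iso V,
      (∀ k, 1 ≤ k → k ≤ m → cs k ∈ CL k) → g = pprodRange cs 0 m →
      (∀ k, 1 ≤ k → k ≤ m → cs' k ∈ CL k) → b⁻¹ * g = pprodRange cs' 0 m →
      ∃ j₀, ∀ i, 1 ≤ i → i ≤ m → i ≠ j₀ → cs' i = cs i) := by
    -- basic setup
  have hchain : ∀ k l : ℕ, k ≤ l → l ≤ m → Gs k ≤ Gs l := by
    intro k l hkl hlm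
    induction l, hkl using Nat.le_induction with
    | base => exact le_rfl
    | succ n hn ih => exact le_trans (ih (by omega)) (hlt n (by omega)).le
  have hsubG : ∀ k ≤ m, Gs k ≤ G := fun k hk => hGm ▸ hchain k m hk le_rfl
  have hstab1 : ∀ H : Subgroup (Iso V), (1 : Iso V) ∈ Stab x₀ H :=
    fun H => ⟨H.one_mem, rfl⟩
  have hstab : ∀ k ≤ m, ∀ h : Iso V, h ∈ Stab x₀ (Gs k) → h = 1 := by
    intro k hk h hh
    have : h ∈ Stab x₀ G := ⟨hsubG k hk hh.1, hh.2⟩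
    rw [hfull] at this; exact this
  have hbg : b⁻¹ * g ∈ G := mul_mem (inv_mem hb.1) hg
  constructor
  · -- Part 1 : greedy runs decode to b⁻¹ * g
    intro d hd
    have key : ∀ k, k ≤ m → pprod d k ∈ Gs k ∧ (pprod d k) r ∈ FR x₀ (Gs k) := by
      intro k
      induction k with
      | zero =>
        intro _
        constructor
        · show (1 : Iso V) ∈ Gs 0; exact (Gs 0).one_mem
        · intro h hh hns
          rw [hG0, Subgroup.mem_bot] at hh
          exact absurd (hh ▸ hstab1 (Gs 0)) hns
      | succ n ih =>
        intro hsm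
        obtain ⟨hmem, hFR⟩ := ih (by omega)
        obtain ⟨hdmem, hdless⟩ := hd n (by omega)
        set x := (pprod d n) r with hx
        obtain ⟨c, hc, hcFR⟩ := hgc n (by omega) x hFR
        have hCLsub := (hCL n (by omega)).1
        have heq : d (n + 1) = c := by
          by_contra hne
          have h1 : d (n + 1) * c⁻¹ ∈ Gs (n + 1) :=
            mul_mem (hCLsub hdmem) (inv_mem (hCLsub hc))
          have h2 : d (n + 1) * c⁻¹ ∉ Stab x₀ (Gs (n + 1)) := by
            intro hst
            exact hne (mul_inv_eq_one.mp (hstab (n + 1) hsm _ hst))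
          have h3 := hcFR _ h1 h2
          have h4 : (d (n + 1) * c⁻¹) (c x) = (d (n + 1)) x := by
            show (d (n + 1)) (c⁻¹ (c x)) = (d (n + 1)) x
            simp
          rw [h4] at h3
          exact absurd (hdless c hc) (not_le.mpr h3)
        constructor
        · rw [GC_pprod_succ]
          exact mul_mem (hCLsub hdmem) ((hlt n (by omega)).le hmem)
        · rw [GC_pprod_succ]
          show (d (n + 1)) x ∈ FR x₀ (Gs (n + 1))
          rw [heq]; exact hcFR
    obtain ⟨hwG, hwFR⟩ := key m le_rfl
    set w := pprod d m with hw
    have hwG' : w ∈ G := hGm ▸ hwG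
    rw [hGm] at hwFR
    by_contra hne
    have hnotin : w ∉ Stab x₀ G * ({b⁻¹ * g} : Set (Iso V)) := by
      intro hmem
      obtain ⟨p, hp, q, hq, hpq⟩ := hmem
      rw [hfull] at hp
      rw [Set.mem_singleton_iff] at hp hq
      rw [hp, hq] at hpq
      simp only [one_mul] at hpq
      exact hne hpq.symm
    have h5 := hr w hwG' hnotin
    have h6 : (b⁻¹ * g) * w⁻¹ ∈ G := mul_mem hbg (inv_mem hwG')
    have h7 : (b⁻¹ * g) * w⁻¹ ∉ Stab x₀ G := by
      intro hst
      rw [hfull, Set.mem_singleton_iff, mul_inv_eq_one] at hst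
      exact hne hst.symm
    have h8 := hwFR _ h6 h7
    have h9 : ((b⁻¹ * g) * w⁻¹) (w r) = (b⁻¹ * g) r := by
      show (b⁻¹ * g) (w⁻¹ (w r)) = (b⁻¹ * g) r
      simp
    rw [h9] at h8
    linarith
  · -- Part 2 : canonical forms differ in at most one factor
    intro cs cs' hcs hgeq hcs' hgeq'
    -- membership of partial products
    have hmemP : ∀ n ≤ m, ∀ e : ℕ → Iso V,
        (∀ k, 1 ≤ k → k ≤ n → e k ∈ CL k) → pprodRange e 0 n ∈ Gs n := by
      intro n
      induction n with
      | zero => intro _ e _; exact (Gs 0).one_mem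
      | succ n ih =>
        intro hn e he
        rw [GC_pprodRange_succ]
        exact mul_mem ((hCL n (by omega)).1 (he (n + 1) (by omega) le_rfl))
          ((hlt n (by omega)).le (ih (by omega) e (fun k h1 h2 => he k h1 (by omega))))
    -- uniqueness of canonical forms
    have huniq : ∀ n ≤ m, ∀ e f : ℕ → Iso V,
        (∀ k, 1 ≤ k → k ≤ n → e k ∈ CL k) → (∀ k, 1 ≤ k → k ≤ n → f k ∈ CL k) →
        pprodRange e 0 n = pprodRange f 0 n → ∀ k, 1 ≤ k → k ≤ n → e k = f k := by
      intro n
      induction n with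
      | zero => intro _ e f _ _ _ k h1 h2; omega
      | succ n ih =>
        intro hn e f he hf hprod k h1 h2
        have hePn : pprodRange e 0 n ∈ Gs n :=
          hmemP n (by omega) e (fun k h1 h2 => he k h1 (by omega))
        have hfPn : pprodRange f 0 n ∈ Gs n :=
          hmemP n (by omega) f (fun k h1 h2 => hf k h1 (by omega))
        have haG : pprodRange e 0 (n + 1) ∈ Gs (n + 1) := hmemP (n + 1) hn e he
        obtain ⟨c₀, _, hc₀uniq⟩ := (hCL n (by omega)).2.2 _ haG
        have heq1 : e (n + 1) = c₀ := by
          apply hc₀uniq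
          refine ⟨he (n + 1) (by omega) le_rfl, ?_⟩
          rw [GC_pprodRange_succ, ← mul_assoc, inv_mul_cancel, one_mul]
          exact hePn
        have heq2 : f (n + 1) = c₀ := by
          apply hc₀uniq
          refine ⟨hf (n + 1) (by omega) le_rfl, ?_⟩
          rw [hprod, GC_pprodRange_succ, ← mul_assoc, inv_mul_cancel, one_mul]
          exact hfPn
        have htop : e (n + 1) = f (n + 1) := heq1.trans heq2.symm
        have hPeq : pprodRange e 0 n = pprodRange f 0 n := by
          have := hprod
          rw [GC_pprodRange_succ, GC_pprodRange_succ, htop] at this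
          exact mul_left_cancel this
        rcases Nat.lt_or_ge k (n + 1) with hk | hk
        · exact ih (by omega) e f (fun j j1 j2 => he j j1 (by omega))
            (fun j j1 j2 => hf j j1 (by omega)) hPeq k h1 (by omega)
        · have : k = n + 1 := by omega
          rw [this]; exact htop
    -- error descent via ECP
    have hdesc : ∀ n ≤ m, ∀ b' ∈ X n ∪ (X n)⁻¹, ∀ ds : ℕ → Iso V,
        (∀ k, 1 ≤ k → k ≤ n → ds k ∈ CL k) →
        ∃ e : ℕ → Iso V, (∀ k, 1 ≤ k → k ≤ n → e k ∈ CL k) ∧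
          b' * pprodRange ds 0 n = pprodRange e 0 n ∧
          ∃ j₀, ∀ i, 1 ≤ i → i ≤ n → i ≠ j₀ → e i = ds i := by
      intro n
      induction n with
      | zero =>
        intro _ b' hb' ds _
        rw [hX0] at hb'
        simp at hb'
      | succ n ih =>
        intro hn b' hb' ds hds
        rcases hECP n (by omega) b' hb' (ds (n + 1)) (hds (n + 1) (by omega) le_rfl)
          with h1 | h2
        · refine ⟨Function.update ds (n + 1) (b' * ds (n + 1)), ?_, ?_, n + 1, ?_⟩
          · intro k hk1 hk2
            rcases eq_or_ne k (n + 1) with hk | hk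
            · rw [hk, Function.update_self]; exact h1
            · rw [Function.update_of_ne hk]; exact hds k hk1 (by omega)
          · rw [GC_pprodRange_succ, GC_pprodRange_succ, Function.update_self,
              GC_pprodRange_congr (Function.update ds (n + 1) (b' * ds (n + 1))) ds n
                (fun j j1 j2 => Function.update_of_ne (by omega) _ _),
              mul_assoc]
          · intro i hi1 hi2 hi3
            exact Function.update_of_ne hi3 _ _
        · obtain ⟨e', he'mem, he'prod, j₀, hj₀⟩ :=
            ih (by omega) _ h2 ds (fun k h1' h2' => hds k h1' (by omega))
          refine ⟨Function.update e' (n + 1) (ds (n + 1)), ?_, ?_, j₀, ?_⟩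
          · intro k hk1 hk2
            rcases eq_or_ne k (n + 1) with hk | hk
            · rw [hk, Function.update_self]; exact hds (n + 1) (by omega) le_rfl
            · rw [Function.update_of_ne hk]; exact he'mem k hk1 (by omega)
          · rw [GC_pprodRange_succ, GC_pprodRange_succ, Function.update_self,
              GC_pprodRange_congr (Function.update e' (n + 1) (ds (n + 1))) e' n
                (fun j j1 j2 => Function.update_of_ne (by omega) _ _),
              ← he'prod]
            group
          · intro i hi1 hi2 hi3
            rcases eq_or_ne i (n + 1) with hk | hk
            · rw [hk, Function.update_self]
            · rw [Function.update_of_ne hk]; exact hj₀ i hi1 (by omega) hi3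
    have hbinv : b⁻¹ ∈ X m ∪ (X m)⁻¹ := by
      rcases hNN hb with h | h
      · right; rw [Set.mem_inv, inv_inv]; exact h
      · left; rw [Set.mem_inv] at h; exact h
    obtain ⟨e, hemem, heprod, j₀, hj₀⟩ := hdesc m le_rfl b⁻¹ hbinv cs hcs
    rw [← hgeq] at heprod
    have hcs'eq : ∀ k, 1 ≤ k → k ≤ m → cs' k = e k :=
      huniq m le_rfl cs' e hcs' hemem (by rw [← hgeq', ← heprod])
    exact ⟨j₀, fun i h1 h2 h3 => (hcs'eq i h1 h2).trans (hj₀ i h1 h2 h3)⟩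
end
end
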